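/- arXiv:1612.03814 — 11 statements merged into one kernel-verified Lean document; each statement's English description precedes it below -/
import Mathlib

section
/- Let F : 𝒫(V) → 𝒫(V) and suppose (E1, E2) is an LL-solution of F. Then for every nonempty set Y in the range of F there exists a minimum preimage: a set Y_m ⊆ V with F(Y_m) = Y such that Y_m ⊆ X for every X ⊆ V with F(X) = Y. -/
variable {V : Type*}

/-- The lower approximation of `X` w.r.t. the equivalence relation `E`:
all points whose `E`-class is contained in `X`. -/
def lowerApprox (E : Setoid V) (X : Set V) : Set V := {x | {y | E.r x y} ⊆ X}

/-- The upper approximation of `X` w.r.t. the equivalence relation `E`: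
all points whose `E`-class meets `X`. -/
def upperApprox (E : Setoid V) (X : Set V) : Set V := {x | ({y | E.r x y} ∩ X).Nonempty}

/-- The positive region of `D` with respect to `C`: the union over the
`D`-equivalence classes of their `C`-lower approximations. -/
def posRegion (C D : Setoid V) : Set V := ⋃ x : V, lowerApprox C {y | D.r x y}

/-- `(E1, E2)` is an LL-solution of `F` if `F X = l_{E2}(l_{E1}(X))` for all `X`. -/
def IsLLSolution (E1 E2 : Setoid V) (F : Set V → Set V) : Prop :=
  ∀ X : Set V, F X = lowerApprox E2 (lowerApprox E1 X)

/-- `(E1, E2)` is the unique LL-solution of `F`. -/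
def IsUniqueLLSolution (E1 E2 : Setoid V) (F : Set V → Set V) : Prop :=
  IsLLSolution E1 E2 F ∧
    ∀ E3 E4 : Setoid V, IsLLSolution E3 E4 F → E3 = E1 ∧ E4 = E2

/-- `(E1, E2)` is a UU-solution of `F` if `F X = u_{E2}(u_{E1}(X))` for all `X`. -/
def IsUUSolution (E1 E2 : Setoid V) (F : Set V → Set V) : Prop :=
  ∀ X : Set V, F X = upperApprox E2 (upperApprox E1 X)

/-- `(E1, E2)` is the unique UU-solution of `F`. -/
def IsUniqueUUSolution (E1 E2 : Setoid V) (F : Set V → Set V) : Prop :=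
  IsUUSolution E1 E2 F ∧
    ∀ E3 E4 : Setoid V, IsUUSolution E3 E4 F → E3 = E1 ∧ E4 = E2

/-- `(E1, E2)` is a UL-solution of `F` if `F X = u_{E2}(l_{E1}(X))` for all `X`. -/
def IsULSolution (E1 E2 : Setoid V) (F : Set V → Set V) : Prop :=
  ∀ X : Set V, F X = upperApprox E2 (lowerApprox E1 X)

/-- `(E1, E2)` is the unique UL-solution of `F`. -/
def IsUniqueULSolution (E1 E2 : Setoid V) (F : Set V → Set V) : Prop :=
  IsULSolution E1 E2 F ∧
    ∀ E3 E4 : Setoid V, IsULSolution E3 E4 F → E3 = E1 ∧ E4 = E2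

/-- `(E1, E2)` is an LU-solution of `F` if `F X = l_{E2}(u_{E1}(X))` for all `X`. -/
def IsLUSolution (E1 E2 : Setoid V) (F : Set V → Set V) : Prop :=
  ∀ X : Set V, F X = lowerApprox E2 (upperApprox E1 X)

/-- `(E1, E2)` is the unique LU-solution of `F`. -/
def IsUniqueLUSolution (E1 E2 : Setoid V) (F : Set V → Set V) : Prop :=
  IsLUSolution E1 E2 F ∧
    ∀ E3 E4 : Setoid V, IsLUSolution E3 E4 F → E3 = E1 ∧ E4 = E2

/-! Lower approximations commute with arbitrary intersections, hence so does `F`; the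
intersection of all preimages of `Y` is therefore again a preimage, and the least one. -/

theorem lowerApprox_iInter {ι : Sort*} (E : Setoid V) (f : ι → Set V) :
    lowerApprox E (⋂ i, f i) = ⋂ i, lowerApprox E (f i) := by
  ext x
  simp only [lowerApprox, Set.mem_ofPred_eq, Set.subset_iInter_iff, Set.mem_iInter]

theorem IsLLSolution.map_sInter {E1 E2 : Setoid V} {F : Set V → Set V}
    (hF : IsLLSolution E1 E2 F) (S : Set (Set V)) : F (⋂₀ S) = ⋂ X ∈ S, F X := by
  unfold IsLLSolution at hF
  simp only [hF, Set.sInter_eq_biInter, lowerApprox_iInter]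

theorem isLeast_sInter_preimage {α β : Type*} {F : Set α → Set β}
    (hF : ∀ S : Set (Set α), F (⋂₀ S) = ⋂ X ∈ S, F X) {Y : Set β} (hY : ∃ X, F X = Y) :
    IsLeast {X | F X = Y} (⋂₀ {X | F X = Y}) := by
  refine ⟨?_, fun X hX => Set.sInter_subset_of_mem hX⟩
  calc F (⋂₀ {X | F X = Y}) = ⋂ X ∈ {X | F X = Y}, F X := hF _
    _ = ⋂ X ∈ {X | F X = Y}, Y := Set.iInter₂_congr fun _ hX => hX
    _ = Y := Set.biInter_const hY _

theorem stmt_4_general (E1 E2 : Setoid V) (F : Set V → Set V)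
    (hF : IsLLSolution E1 E2 F) (Y : Set V)
    (hrange : ∃ X : Set V, F X = Y) :
    ∃ Ym : Set V, F Ym = Y ∧ ∀ X : Set V, F X = Y → Ym ⊆ X := by
  obtain ⟨hYm, hleast⟩ := isLeast_sInter_preimage hF.map_sInter hrange
  exact ⟨_, hYm, fun _ hX => hleast hX⟩

theorem stmt_4 [Fintype V] [Nonempty V] (E1 E2 : Setoid V) (F : Set V → Set V)
    (hF : IsLLSolution E1 E2 F) (Y : Set V) (hY : Y.Nonempty)
    (hrange : ∃ X : Set V, F X = Y) :
    ∃ Ym : Set V, F Ym = Y ∧ ∀ X : Set V, F X = Y → Ym ⊆ X :=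
  stmt_4_general E1 E2 F hF Y hrange
end

section
/- Let F : 𝒫(V) → 𝒫(V) and suppose (E1, E2) is an LL-solution of F. Then: (a) for all a, b ∈ V with a E2 b and every set X in the range of F, a ∈ X if and only if b ∈ X; and (b) for all a, b ∈ V with a E1 b, every nonempty Y in the range of F, and every X that is minimal with respect to ⊆ among sets satisfying F(X) = Y, a ∈ X if and only if b ∈ X. -/
variable {V : Type*}

/-! Every value of `F` is a lower approximation for `E2`, hence a union of `E2`-classes. Since
`l_{E1}` is idempotent, `X` and `l_{E1}(X) ⊆ X` have the same image under `F`, so a minimal `X`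
equals `l_{E1}(X)` and is a union of `E1`-classes. -/

section Approximation

variable (E : Setoid V) {X : Set V}

theorem lowerApprox_subset (X : Set V) : lowerApprox E X ⊆ X :=
  fun x hx => hx (E.refl x)

theorem mem_lowerApprox_iff_of_rel {a b : V} (hab : E.r a b) :
    a ∈ lowerApprox E X ↔ b ∈ lowerApprox E X :=
  ⟨fun ha _ hy => ha (E.trans hab hy), fun hb _ hy => hb (E.trans (E.symm hab) hy)⟩

theorem lowerApprox_lowerApprox (X : Set V) :
    lowerApprox E (lowerApprox E X) = lowerApprox E X :=
  (lowerApprox_subset E _).antisymm fun _ hx _ hy _ hz => hx (E.trans hy hz)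

end Approximation

namespace IsLLSolution

variable {E1 E2 : Setoid V} {F : Set V → Set V}

theorem mem_iff_of_rel (hF : IsLLSolution E1 E2 F) {a b : V} (hab : E2.r a b) (W : Set V) :
    a ∈ F W ↔ b ∈ F W := by
  rw [hF W]
  exact mem_lowerApprox_iff_of_rel E2 hab

theorem apply_lowerApprox (hF : IsLLSolution E1 E2 F) (X : Set V) :
    F (lowerApprox E1 X) = F X := by
  rw [hF, hF, lowerApprox_lowerApprox]

theorem lowerApprox_eq_of_minimal (hF : IsLLSolution E1 E2 F) {X : Set V}
    (hmin : ∀ X' : Set V, F X' = F X → X' ⊆ X → X' = X) :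
    lowerApprox E1 X = X :=
  hmin _ (hF.apply_lowerApprox X) (lowerApprox_subset E1 X)

end IsLLSolution

theorem stmt_5_general (E1 E2 : Setoid V) (F : Set V → Set V)
    (hF : IsLLSolution E1 E2 F) :
    (∀ a b : V, E2.r a b → ∀ W : Set V, a ∈ F W ↔ b ∈ F W) ∧
    (∀ a b : V, E1.r a b → ∀ Y X : Set V, Y.Nonempty → F X = Y →
      (∀ X' : Set V, F X' = Y → X' ⊆ X → X' = X) → (a ∈ X ↔ b ∈ X)) := by
  refine ⟨fun a b hab => hF.mem_iff_of_rel hab, ?_⟩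
  rintro a b hab Y X - rfl hmin
  rw [← hF.lowerApprox_eq_of_minimal hmin]
  exact mem_lowerApprox_iff_of_rel E1 hab

theorem stmt_5 [Fintype V] [Nonempty V] (E1 E2 : Setoid V) (F : Set V → Set V)
    (hF : IsLLSolution E1 E2 F) :
    (∀ a b : V, E2.r a b → ∀ W : Set V, a ∈ F W ↔ b ∈ F W) ∧
    (∀ a b : V, E1.r a b → ∀ Y X : Set V, Y.Nonempty → F X = Y →
      (∀ X' : Set V, F X' = Y → X' ⊆ X → X' = X) → (a ∈ X ↔ b ∈ X)) :=
  stmt_5_general E1 E2 F hF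
end

section
/- Let F : 𝒫(V) → 𝒫(V), suppose (E1, E2) is an LL-solution of F, and suppose x, y ∈ V satisfy ¬(x E2 y) and u_{E1}([x]_{E2}) = u_{E1}([y]_{E2}). Let H2 be the equivalence relation on V defined by: a H2 b if and only if a E2 b, or both a and b belong to [x]_{E2} ∪ [y]_{E2}. Then (E1, H2) is also an LL-solution of F. -/
variable {V : Type*}

/-!
Every set of the form `l_{E1}(X)` is a union of `E1`-classes, hence contains the `E1`-upper
approximation of each of its subsets. So if two `E2`-classes have the same `E1`-upper
approximation, `l_{E1}(X)` contains one of them iff it contains the other, and merging them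
into one class does not change `l_{E2}(l_{E1}(X))`.
-/

section Approx

variable (E : Setoid V)

lemma subset_upperApprox (X : Set V) : X ⊆ upperApprox E X :=
  fun a ha => ⟨a, E.refl a, ha⟩

lemma upperApprox_mono {X Y : Set V} (h : X ⊆ Y) : upperApprox E X ⊆ upperApprox E Y :=
  fun _ ⟨b, hab, hb⟩ => ⟨b, hab, h hb⟩

lemma upperApprox_lowerApprox_subset (X : Set V) :
    upperApprox E (lowerApprox E X) ⊆ lowerApprox E X :=
  fun _ ⟨_, hab, hb⟩ _ hac => hb (E.trans (E.symm hab) hac)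

lemma setOf_rel_eq_of_rel {a b : V} (h : E.r a b) : {z | E.r b z} = {z | E.r a z} :=
  Set.ext fun _ => ⟨E.trans h, E.trans (E.symm h)⟩

lemma lowerApprox_lowerApprox_eq_of_le {E' H : Setoid V} (hle : E' ≤ H)
    (hH : ∀ a b, H.r a b → b ∈ upperApprox E {z | E'.r a z}) (X : Set V) :
    lowerApprox H (lowerApprox E X) = lowerApprox E' (lowerApprox E X) := by
  apply Set.Subset.antisymm
  · exact fun _ ha _ hab => ha (hle hab)
  · intro a ha b hab
    exact upperApprox_lowerApprox_subset E X (upperApprox_mono E ha (hH a b hab))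

end Approx

theorem stmt_6_general (E1 E2 H2 : Setoid V) (F : Set V → Set V)
    (hF : IsLLSolution E1 E2 F) (x y : V)
    (hu : upperApprox E1 {z | E2.r x z} = upperApprox E1 {z | E2.r y z})
    (hH2 : ∀ a b : V, H2.r a b ↔
      (E2.r a b ∨ ((E2.r x a ∨ E2.r y a) ∧ (E2.r x b ∨ E2.r y b)))) :
    IsLLSolution E1 H2 F := by
  have hle : E2 ≤ H2 := fun a b h => (hH2 a b).2 (Or.inl h)
  have hH : ∀ a b, H2.r a b → b ∈ upperApprox E1 {z | E2.r a z} := by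
    intro a b hab
    rcases (hH2 a b).1 hab with hab | ⟨ha, hb⟩
    · exact subset_upperApprox E1 _ hab
    have hclass : upperApprox E1 {z | E2.r a z} = upperApprox E1 {z | E2.r x z} := by
      rcases ha with ha | ha <;> rw [setOf_rel_eq_of_rel E2 ha, hu]
    rw [hclass]
    rcases hb with hb | hb
    · exact subset_upperApprox E1 _ hb
    · exact hu ▸ subset_upperApprox E1 _ hb
  exact fun X => (hF X).trans (lowerApprox_lowerApprox_eq_of_le E1 hle hH X).symm

theorem stmt_6 [Fintype V] [Nonempty V] (E1 E2 H2 : Setoid V) (F : Set V → Set V)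
    (hF : IsLLSolution E1 E2 F) (x y : V) (hxy : ¬ E2.r x y)
    (hu : upperApprox E1 {z | E2.r x z} = upperApprox E1 {z | E2.r y z})
    (hH2 : ∀ a b : V, H2.r a b ↔
      (E2.r a b ∨ ((E2.r x a ∨ E2.r y a) ∧ (E2.r x b ∨ E2.r y b)))) :
    IsLLSolution E1 H2 F :=
  stmt_6_general E1 E2 H2 F hF x y hu hH2
end

section
/- Let F : 𝒫(V) → 𝒫(V), suppose (E1, E2) is an LL-solution of F, and suppose x, y ∈ V satisfy ¬(x E1 y) and u_{E2}([x]_{E1}) = u_{E2}([y]_{E1}). Let H1 be the equivalence relation on V defined by: a H1 b if and only if a E1 b, or both a and b belong to [x]_{E1} ∪ [y]_{E1}. Then (H1, E2) is also an LL-solution of F. -/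
variable {V : Type*}

/-! Since `E1 ≤ H1`, one inclusion is monotonicity of the lower approximations. For the
other, take `z` in `l_{E2}(l_{E1}(X))`. If the `E2`-class of `z` meets `[x]_{E1}` or `[y]_{E1}`,
then, as these two classes have the same `E2`-upper approximation, it meets both; since that
`E2`-class lies inside `l_{E1}(X)`, both `E1`-classes lie in `X`. So merging them into one
`H1`-class does not change `l_{E2}(l_{E1}(X))`. -/

theorem lowerApprox_mono (E : Setoid V) : Monotone (lowerApprox E) :=
  fun _ _ hXY _ hx => hx.trans hXY

theorem lowerApprox_subset_of_le {E H : Setoid V} (hEH : E ≤ H) (X : Set V) :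
    lowerApprox H X ⊆ lowerApprox E X :=
  fun _ hx _ hxy => hx (hEH hxy)

theorem setOf_rel_subset_of_mem_upperApprox {E1 E2 : Setoid V} {X : Set V} {z a : V}
    (hz : z ∈ lowerApprox E2 (lowerApprox E1 X)) (ha : z ∈ upperApprox E2 {w | E1.r a w}) :
    {w | E1.r a w} ⊆ X := by
  obtain ⟨w, hzw, haw⟩ := ha
  exact fun v hav => hz hzw (E1.trans (E1.symm haw) hav)

theorem stmt_7_general (E1 E2 H1 : Setoid V) (F : Set V → Set V)
    (hF : IsLLSolution E1 E2 F) (x y : V)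
    (hu : upperApprox E2 {z | E1.r x z} = upperApprox E2 {z | E1.r y z})
    (hH1 : ∀ a b : V, H1.r a b ↔
      (E1.r a b ∨ ((E1.r x a ∨ E1.r y a) ∧ (E1.r x b ∨ E1.r y b)))) :
    IsLLSolution H1 E2 F := by
  intro X
  rw [hF X]
  have hE1H1 : E1 ≤ H1 := fun a b hab => (hH1 a b).2 (Or.inl hab)
  refine subset_antisymm ?_ (lowerApprox_mono E2 (lowerApprox_subset_of_le hE1H1 X))
  intro z hz w hzw v hwv
  rcases (hH1 w v).1 hwv with hwv | ⟨hw, hv⟩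
  · exact hz hzw hwv
  have hzx : z ∈ upperApprox E2 {a | E1.r x a} := by
    rcases hw with hw | hw
    exacts [⟨w, hzw, hw⟩, hu ▸ ⟨w, hzw, hw⟩]
  have hzy : z ∈ upperApprox E2 {a | E1.r y a} := hu ▸ hzx
  rcases hv with hv | hv
  exacts [setOf_rel_subset_of_mem_upperApprox hz hzx hv,
    setOf_rel_subset_of_mem_upperApprox hz hzy hv]

theorem stmt_7 [Fintype V] [Nonempty V] (E1 E2 H1 : Setoid V) (F : Set V → Set V)
    (hF : IsLLSolution E1 E2 F) (x y : V) (hxy : ¬ E1.r x y)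
    (hu : upperApprox E2 {z | E1.r x z} = upperApprox E2 {z | E1.r y z})
    (hH1 : ∀ a b : V, H1.r a b ↔
      (E1.r a b ∨ ((E1.r x a ∨ E1.r y a) ∧ (E1.r x b ∨ E1.r y b)))) :
    IsLLSolution H1 E2 F :=
  stmt_7_general E1 E2 H1 F hF x y hu hH1
end

section
/- Let F : 𝒫(V) → 𝒫(V). If F has an LL-solution, then F has an LL-solution (E1, E2) satisfying: (i) for all x, y ∈ V with ¬(x E2 y), u_{E1}([x]_{E2}) ≠ u_{E1}([y]_{E2}); and (ii) for all x, y ∈ V with ¬(x E1 y), u_{E2}([x]_{E1}) ≠ u_{E2}([y]_{E1}). -/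
variable {V : Type*}

/-!
`x ∈ l_B (l_A X)` holds iff `u_A([x]_B) ⊆ X`, so an LL-solution `(A, B)` matters only through the
map `x ↦ u_A([x]_B)`. Coarsening `B` to the kernel of this map does not change it, and neither
does coarsening `A` afterwards to the kernel of `a ↦ u_B([a]_A)`, because
`a ∈ u_A([x]_B) ↔ x ∈ u_B([a]_A)`. The two coarsened relations are the required solution: each
is by construction the kernel of the map whose injectivity conditions (i) and (ii) ask for.
-/

lemma mem_upperApprox_class_comm {A B : Setoid V} {x a : V} :
    a ∈ upperApprox A {z | B.r x z} ↔ x ∈ upperApprox B {z | A.r a z} :=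
  ⟨fun ⟨c, hac, hxc⟩ => ⟨c, hxc, hac⟩, fun ⟨c, hxc, hac⟩ => ⟨c, hac, hxc⟩⟩

lemma upperApprox_class_eq_of_forall_dual {A A' B : Setoid V}
    (h : ∀ a, upperApprox B {z | A'.r a z} = upperApprox B {z | A.r a z}) (x : V) :
    upperApprox A' {z | B.r x z} = upperApprox A {z | B.r x z} := by
  ext a
  rw [mem_upperApprox_class_comm, h, ← mem_upperApprox_class_comm]

lemma mem_lowerApprox_lowerApprox_iff {A B : Setoid V} {X : Set V} {x : V} :
    x ∈ lowerApprox B (lowerApprox A X) ↔ upperApprox A {z | B.r x z} ⊆ X :=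
  ⟨fun h _ ⟨_, hac, hxc⟩ => h hxc (A.symm hac),
    fun h _ hxy _ hyz => h ⟨_, A.symm hyz, hxy⟩⟩

lemma lowerApprox_lowerApprox_congr {A B A' B' : Setoid V}
    (h : ∀ x, upperApprox A' {z | B'.r x z} = upperApprox A {z | B.r x z}) (X : Set V) :
    lowerApprox B (lowerApprox A X) = lowerApprox B' (lowerApprox A' X) := by
  ext x
  rw [mem_lowerApprox_lowerApprox_iff, mem_lowerApprox_lowerApprox_iff, h]

/-- The coarsest equivalence relation `B'` with `u_A([x]_{B'}) = u_A([x]_B)` for all `x`. -/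
def upperKer (A B : Setoid V) : Setoid V :=
  Setoid.ker fun x => upperApprox A {z | B.r x z}

lemma upperKer_rel_iff {A B : Setoid V} {x y : V} :
    (upperKer A B).r x y ↔ upperApprox A {z | B.r x z} = upperApprox A {z | B.r y z} :=
  Iff.rfl

lemma le_upperKer (A B : Setoid V) : B ≤ upperKer A B := by
  intro x y hxy
  rw [upperKer_rel_iff]
  congr 1
  ext z
  exact ⟨B.trans (B.symm hxy), B.trans hxy⟩

lemma upperApprox_upperKer_class (A B : Setoid V) (x : V) :
    upperApprox A {z | (upperKer A B).r x z} = upperApprox A {z | B.r x z} := by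
  refine Set.Subset.antisymm ?_ fun a ⟨c, hac, hxc⟩ => ⟨c, hac, le_upperKer A B hxc⟩
  rintro a ⟨c, hac, hxc⟩
  rw [upperKer_rel_iff.1 hxc]
  exact ⟨c, hac, B.refl c⟩

lemma upperApprox_upperKer_class_ne {A B : Setoid V} {x y : V} (h : ¬ (upperKer A B).r x y) :
    upperApprox A {z | (upperKer A B).r x z} ≠ upperApprox A {z | (upperKer A B).r y z} := by
  rw [upperApprox_upperKer_class, upperApprox_upperKer_class]
  exact fun hxy => h (upperKer_rel_iff.2 hxy)

theorem stmt_8_general (F : Set V → Set V)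
    (h : ∃ E1 E2 : Setoid V, IsLLSolution E1 E2 F) :
    ∃ E1 E2 : Setoid V, IsLLSolution E1 E2 F ∧
      (∀ x y : V, ¬ E2.r x y →
        upperApprox E1 {z | E2.r x z} ≠ upperApprox E1 {z | E2.r y z}) ∧
      (∀ x y : V, ¬ E1.r x y →
        upperApprox E2 {z | E1.r x z} ≠ upperApprox E2 {z | E1.r y z}) := by
  obtain ⟨E1, E2, hF⟩ := h
  set E2' := upperKer E1 E2
  set E1' := upperKer E2' E1
  have hE1' : ∀ x, upperApprox E1' {z | E2'.r x z} = upperApprox E1 {z | E2'.r x z} :=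
    upperApprox_class_eq_of_forall_dual (upperApprox_upperKer_class E2' E1)
  refine ⟨E1', E2', fun X => ?_, fun x y hxy => ?_, fun x y hxy => ?_⟩
  · rw [hF X]
    exact lowerApprox_lowerApprox_congr
      (fun x => (hE1' x).trans (upperApprox_upperKer_class E1 E2 x)) X
  · rw [hE1', hE1']
    exact upperApprox_upperKer_class_ne hxy
  · exact upperApprox_upperKer_class_ne hxy

theorem stmt_8 [Fintype V] [Nonempty V] (F : Set V → Set V)
    (h : ∃ E1 E2 : Setoid V, IsLLSolution E1 E2 F) :
    ∃ E1 E2 : Setoid V, IsLLSolution E1 E2 F ∧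
      (∀ x y : V, ¬ E2.r x y →
        upperApprox E1 {z | E2.r x z} ≠ upperApprox E1 {z | E2.r y z}) ∧
      (∀ x y : V, ¬ E1.r x y →
        upperApprox E2 {z | E1.r x z} ≠ upperApprox E2 {z | E1.r y z}) :=
  stmt_8_general F h
end

section
/- Let E1 and E2 be equivalence relations on V and suppose (E1, E2) is the unique LL-solution of the operator F = l_{E2} ∘ l_{E1}. Then the number of equivalence classes of E1 is strictly less than 2 raised to the number of equivalence classes of E2, and the number of equivalence classes of E2 is strictly less than 2 raised to the number of equivalence classes of E1. -/
variable {V : Type*}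

/-
`l_{E2} ∘ l_{E1}` is the lower approximation by the composite relation `R = E2 ∘ E1`
(`z R u` iff the `E2`-class of `z` meets the `E1`-class of `u`), so any pair with the same
composite is again an LL-solution. If two `E1`-classes meet the same `E2`-classes, merging them
leaves `R` unchanged; dually for two `E2`-classes meeting the same `E1`-classes. Uniqueness thus
makes `[x]_{E1} ↦ {E2-classes meeting [x]_{E1}}` injective, with values nonempty subsets of
`V/E2`, whence `|V/E1| ≤ 2^|V/E2| - 1`, and symmetrically.
-/

open Relation

namespace Setoid

def mergeClasses (E : Setoid V) (x y : V) : Setoid V where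
  r a b := E a b ∨ (E a x ∨ E a y) ∧ (E b x ∨ E b y)
  iseqv :=
    { refl := fun a => Or.inl (E.refl a)
      symm := fun h => h.imp E.symm And.symm
      trans := by
        rintro a b c (hab | ⟨ha, hb⟩) (hbc | ⟨hb', hc⟩)
        · exact Or.inl (E.trans hab hbc)
        · exact Or.inr ⟨hb'.imp (E.trans hab) (E.trans hab), hc⟩
        · exact Or.inr ⟨ha, hb.imp (E.trans (E.symm hbc)) (E.trans (E.symm hbc))⟩
        · exact Or.inr ⟨ha, hc⟩ }

theorem mergeClasses_rel (E : Setoid V) (x y : V) : (E.mergeClasses x y) x y :=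
  Or.inr ⟨Or.inl (E.refl x), Or.inr (E.refl y)⟩

theorem comp_mergeClasses_right (E : Setoid V) (r : V → V → Prop) {x x' : V}
    (h : ∀ w, Comp r E w x ↔ Comp r E w x') :
    Comp r (E.mergeClasses x x') = Comp r E := by
  have close : ∀ {z a b}, Comp r E z a → E a b → Comp r E z b :=
    fun ⟨v, hzv, hva⟩ hab => ⟨v, hzv, E.trans hva hab⟩
  ext z u
  constructor
  · rintro ⟨w, hzw, hwu | ⟨hw, hu⟩⟩
    · exact ⟨w, hzw, hwu⟩
    have hzx : Comp r E z x ∧ Comp r E z x' := by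
      rcases hw with hw | hw
      · have := close ⟨w, hzw, E.refl w⟩ hw; exact ⟨this, (h z).1 this⟩
      · have := close ⟨w, hzw, E.refl w⟩ hw; exact ⟨(h z).2 this, this⟩
    rcases hu with hu | hu
    · exact close hzx.1 (E.symm hu)
    · exact close hzx.2 (E.symm hu)
  · rintro ⟨w, hzw, hwu⟩
    exact ⟨w, hzw, Or.inl hwu⟩

theorem flip_eq (E : Setoid V) : flip E = E :=
  funext₂ fun _ _ => propext E.comm'

theorem flip_comp (A B : Setoid V) : flip (Comp A B) = Comp B A := by
  rw [Relation.flip_comp, flip_eq, flip_eq]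

theorem comp_mergeClasses_left (E : Setoid V) (r : V → V → Prop) {y y' : V}
    (h : ∀ w, Comp E r y w ↔ Comp E r y' w) :
    Comp (E.mergeClasses y y') r = Comp E r := by
  have hflip : ∀ F : Setoid V, Comp (flip r) F = flip (Comp F r) := fun F => by
    rw [Relation.flip_comp, flip_eq]
  have := comp_mergeClasses_right E (flip r) (x := y) (x' := y') fun w => by
    rw [hflip]; exact h w
  rw [hflip, hflip] at this
  exact congrArg flip this

end Setoid

theorem lowerApprox_lowerApprox_s9 (E1 E2 : Setoid V) (X : Set V) :
    lowerApprox E2 (lowerApprox E1 X) = {z | ∀ u, Comp E2 E1 z u → u ∈ X} := by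
  ext z
  exact ⟨fun hz u ⟨w, hzw, hwu⟩ => hz hzw hwu, fun hz w hzw u hwu => hz u ⟨w, hzw, hwu⟩⟩

theorem IsLLSolution.of_comp_eq {E1 E2 E3 E4 : Setoid V} {F : Set V → Set V}
    (hF : IsLLSolution E1 E2 F) (h : Comp E4 E3 = Comp E2 E1) : IsLLSolution E3 E4 F := by
  intro X
  rw [hF X, lowerApprox_lowerApprox_s9, lowerApprox_lowerApprox_s9, h]

namespace IsUniqueLLSolution

variable {E1 E2 : Setoid V} {F : Set V → Set V}

theorem fst_rel_of_comp_iff (hF : IsUniqueLLSolution E1 E2 F) {x x' : V}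
    (h : ∀ w, Comp E2 E1 w x ↔ Comp E2 E1 w x') : E1 x x' := by
  have hsol := hF.1.of_comp_eq (E1.comp_mergeClasses_right E2 h)
  exact (hF.2 _ _ hsol).1 ▸ E1.mergeClasses_rel x x'

theorem snd_rel_of_comp_iff (hF : IsUniqueLLSolution E1 E2 F) {y y' : V}
    (h : ∀ w, Comp E1 E2 w y ↔ Comp E1 E2 w y') : E2 y y' := by
  replace h : ∀ w, Comp E2 E1 y w ↔ Comp E2 E1 y' w := by rw [← E1.flip_comp E2]; exact h
  have hsol := hF.1.of_comp_eq (E2.comp_mergeClasses_left E1 h)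
  exact (hF.2 _ _ hsol).2 ▸ E2.mergeClasses_rel y y'

end IsUniqueLLSolution

theorem Setoid.card_quotient_lt_two_pow (A B : Setoid V) [Finite (Quotient B)]
    (h : ∀ x x', (∀ w, Comp B A w x ↔ Comp B A w x') → A x x') :
    Nat.card (Quotient A) < 2 ^ Nat.card (Quotient B) := by
  have := Fintype.ofFinite (Quotient B)
  let f (q : Quotient A) : Set (Quotient B) := Quotient.mk B '' (Quotient.mk A ⁻¹' {q})
  have mk_mem_f (w x : V) : Quotient.mk B w ∈ f ⟦x⟧ ↔ Comp B A w x := by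
    simp only [f, Set.mem_image, Set.mem_preimage, Set.mem_singleton_iff, Quotient.eq]
    exact ⟨fun ⟨v, hvx, hvw⟩ => ⟨v, B.symm hvw, hvx⟩, fun ⟨v, hwv, hvx⟩ => ⟨v, hvx, B.symm hwv⟩⟩
  have hf : Function.Injective f := Quotient.ind₂ fun x x' hxx' =>
    Quotient.sound (h x x' fun w => by rw [← mk_mem_f, ← mk_mem_f, hxx'])
  have hempty : ∅ ∉ Set.range f := by
    rintro ⟨q, hq⟩
    obtain ⟨x, rfl⟩ := q.exists_rep
    simpa [hq] using (mk_mem_f x x).2 ⟨x, B.refl x, A.refl x⟩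
  have := Finite.of_injective f hf
  have := Fintype.ofFinite (Quotient A)
  simpa only [Nat.card_eq_fintype_card, Fintype.card_set] using
    Fintype.card_lt_of_injective_of_notMem f hf hempty

theorem stmt_9_general [Fintype V] (E1 E2 : Setoid V)
    (h : IsUniqueLLSolution E1 E2 (fun X => lowerApprox E2 (lowerApprox E1 X))) :
    Nat.card (Quotient E1) < 2 ^ Nat.card (Quotient E2) ∧
    Nat.card (Quotient E2) < 2 ^ Nat.card (Quotient E1) :=
  ⟨E1.card_quotient_lt_two_pow E2 fun _ _ => h.fst_rel_of_comp_iff,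
    E2.card_quotient_lt_two_pow E1 fun _ _ => h.snd_rel_of_comp_iff⟩

theorem stmt_9 [Fintype V] [Nonempty V] (E1 E2 : Setoid V)
    (h : IsUniqueLLSolution E1 E2 (fun X => lowerApprox E2 (lowerApprox E1 X))) :
    Nat.card (Quotient E1) < 2 ^ Nat.card (Quotient E2) ∧
    Nat.card (Quotient E2) < 2 ^ Nat.card (Quotient E1) :=
  stmt_9_general E1 E2 h
end

section
/- Let E1 and E2 be equivalence relations on V and let F = l_{E2} ∘ l_{E1}, so that (E1, E2) is an LL-solution of F. Then (E1, E2) is the unique LL-solution of F if and only if all of the following hold: (i) for all x, y ∈ V with ¬(x E2 y), u_{E1}([x]_{E2}) ≠ u_{E1}([y]_{E2}); (ii) for all x, y ∈ V with ¬(x E1 y), u_{E2}([x]_{E1}) ≠ u_{E2}([y]_{E1}); (iii) for every x ∈ V there exists z ∈ V such that [x]_{E2} ∩ [z]_{E1} has exactly one element; (iv) for every x ∈ V there exists z ∈ V such that [x]_{E1} ∩ [z]_{E2} has exactly one element. -/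
variable {V : Type*}

/-!
Write `N(x) = u_{E1}([x]_{E2})`. A point `x` lies in `l_{E2}(l_{E1}(X))` exactly when
`N(x) ⊆ X`, so `(E3, E4)` is an LL-solution of `l_{E2} ∘ l_{E1}` iff it yields the same map `N`;
moreover `z ∈ N(x) ↔ x ∈ u_{E2}([z]_{E1})`, which makes the whole situation symmetric in
`E1, E2`. If (i) fails, replacing `E2` by the kernel of `N` gives a second solution. If (iii)
fails at `x`, every `E1`-class meets `[x]_{E2}` in none or at least two points, so `[x]_{E2}` can
be split in two parts each meeting every such class, and splitting `E2` accordingly gives a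
second solution. Conversely, (i) and (ii) force `E4 ≤ E2` and `E3 ≤ E1` for any solution, and a
singleton `[x]_{E2} ∩ [z]_{E1} = {a}` then pins every point of `[x]_{E2}` to `a` under `E4`.
-/

namespace LLSolution

lemma setOf_rel_eq_of_rel (E : Setoid V) {x y : V} (h : E.r x y) :
    {z | E.r x z} = {z | E.r y z} :=
  Set.ext fun _ => ⟨E.trans' (E.symm' h), E.trans' h⟩

lemma upperApprox_mono (E : Setoid V) {X Y : Set V} (h : X ⊆ Y) :
    upperApprox E X ⊆ upperApprox E Y :=
  fun _ ⟨y, hy, hyX⟩ => ⟨y, hy, h hyX⟩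

lemma mem_upperApprox_setOf_rel_comm {E1 E2 : Setoid V} {x z : V} :
    z ∈ upperApprox E1 {y | E2.r x y} ↔ x ∈ upperApprox E2 {y | E1.r z y} :=
  ⟨fun ⟨y, hzy, hxy⟩ => ⟨y, hxy, hzy⟩, fun ⟨y, hxy, hzy⟩ => ⟨y, hzy, hxy⟩⟩

lemma mem_lowerApprox_lowerApprox_iff {E1 E2 : Setoid V} {X : Set V} {x : V} :
    x ∈ lowerApprox E2 (lowerApprox E1 X) ↔ upperApprox E1 {y | E2.r x y} ⊆ X :=
  ⟨fun h _ ⟨_, hzy, hxy⟩ => h hxy (E1.symm' hzy),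
    fun h y hxy _ hyz => h ⟨y, E1.symm' hyz, hxy⟩⟩

theorem isLLSolution_iff {E1 E2 E3 E4 : Setoid V} :
    IsLLSolution E3 E4 (fun X => lowerApprox E2 (lowerApprox E1 X)) ↔
      ∀ x, upperApprox E3 {y | E4.r x y} = upperApprox E1 {y | E2.r x y} := by
  constructor
  · intro h x
    have hx := fun X => Set.ext_iff.1 (h X) x
    simp only [mem_lowerApprox_lowerApprox_iff] at hx
    -- test both operators on the two candidate neighbourhoods of `x`
    exact Set.Subset.antisymm ((hx _).1 subset_rfl) ((hx _).2 subset_rfl)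
  · intro h X
    ext x
    simp only [mem_lowerApprox_lowerApprox_iff, h x]

theorem isLLSolution_comm {E1 E2 E3 E4 : Setoid V} :
    IsLLSolution E3 E4 (fun X => lowerApprox E2 (lowerApprox E1 X)) ↔
      IsLLSolution E4 E3 (fun X => lowerApprox E1 (lowerApprox E2 X)) := by
  have transpose : ∀ {E1 E2 E3 E4 : Setoid V},
      (∀ x, upperApprox E3 {y | E4.r x y} = upperApprox E1 {y | E2.r x y}) →
        ∀ z, upperApprox E4 {y | E3.r z y} = upperApprox E2 {y | E1.r z y} :=
    fun h z => Set.ext fun x => by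
      rw [← mem_upperApprox_setOf_rel_comm, h x, mem_upperApprox_setOf_rel_comm]
  simp only [isLLSolution_iff]
  exact ⟨transpose, transpose⟩

theorem isLLSolution_ker (E1 E2 : Setoid V) :
    IsLLSolution E1 (Setoid.ker fun x => upperApprox E1 {y | E2.r x y})
      (fun X => lowerApprox E2 (lowerApprox E1 X)) := by
  refine isLLSolution_iff.2 fun x => Set.Subset.antisymm ?_ ?_
  · rintro z ⟨y, hzy, hxy⟩
    rw [show upperApprox E1 {y | E2.r x y} = _ from hxy]
    exact ⟨y, hzy, E2.refl' y⟩
  · rintro z ⟨y, hzy, hxy⟩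
    exact ⟨y, hzy, congrArg (upperApprox E1) (setOf_rel_eq_of_rel E2 hxy)⟩

theorem exists_subset_splitting_classes (E : Setoid V) (C : Set V)
    (hC : ∀ z a, C ∩ {w | E.r z w} ≠ {a}) :
    ∃ A ⊆ C, ∀ y ∈ C, (∃ a ∈ A, E.r y a) ∧ ∃ b ∈ C \ A, E.r y b := by
  obtain rfl | ⟨x₀, -⟩ := C.eq_empty_or_nonempty
  · exact ⟨∅, subset_rfl, fun _ h => h.elim⟩
  have : Nonempty V := ⟨x₀⟩
  -- `pick y` is a point of `C ∩ [y]_E` depending only on the class of `y`; keep the fixed points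
  let pick : V → V := fun y => Classical.epsilon fun v => v ∈ C ∧ E.r y v
  have pick_spec : ∀ y ∈ C, pick y ∈ C ∧ E.r y (pick y) := fun y hy =>
    Classical.epsilon_spec (p := fun v => v ∈ C ∧ E.r y v) ⟨y, hy, E.refl' y⟩
  have pick_eq : ∀ {y y'}, E.r y y' → pick y = pick y' := fun h =>
    congrArg Classical.epsilon <| funext fun _ =>
      propext (and_congr_right' ⟨E.trans' (E.symm' h), E.trans' h⟩)
  refine ⟨{w ∈ C | pick w = w}, fun w hw => hw.1, fun y hy => ⟨?_, ?_⟩⟩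
  · obtain ⟨hpC, hyp⟩ := pick_spec y hy
    exact ⟨pick y, ⟨hpC, (pick_eq hyp).symm⟩, hyp⟩
  · obtain ⟨hpC, hyp⟩ := pick_spec y hy
    obtain ⟨b, ⟨hbC, hyb⟩, hbp⟩ : ∃ b ∈ C ∩ {w | E.r y w}, b ≠ pick y := by
      by_contra! h
      exact hC y (pick y) (Set.eq_singleton_iff_unique_mem.2 ⟨⟨hpC, hyp⟩, h⟩)
    refine ⟨b, ⟨hbC, fun hb => hbp ?_⟩, hyb⟩
    rw [← hb.2, pick_eq (E.trans' (E.symm' hyb) hyp), ← pick_eq hyp]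

theorem isLLSolution_inf_ker_mem {E1 E2 : Setoid V} {x : V} {A : Set V}
    (hA : A ⊆ {w | E2.r x w})
    (hsplit : ∀ y ∈ {w | E2.r x w}, (∃ a ∈ A, E1.r y a) ∧ ∃ b ∈ {w | E2.r x w} \ A, E1.r y b) :
    IsLLSolution E1 (E2 ⊓ Setoid.ker (· ∈ A)) (fun X => lowerApprox E2 (lowerApprox E1 X)) := by
  refine isLLSolution_iff.2 fun w => Set.Subset.antisymm
    (upperApprox_mono E1 fun _ hy => (Setoid.inf_iff_and.1 hy).1) ?_
  rintro z ⟨y, hzy, hwy⟩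
  by_cases hwC : E2.r x w
  · obtain ⟨⟨a, haA, hya⟩, b, ⟨hbC, hbA⟩, hyb⟩ := hsplit y (E2.trans' hwC hwy)
    by_cases hwA : w ∈ A
    · refine ⟨a, E1.trans' hzy hya, Setoid.inf_iff_and.2 ⟨?_, Setoid.ker_def.2 ?_⟩⟩
      · exact E2.trans' (E2.symm' hwC) (hA haA)
      · simp only [hwA, haA]
    · refine ⟨b, E1.trans' hzy hyb, Setoid.inf_iff_and.2 ⟨?_, Setoid.ker_def.2 ?_⟩⟩
      · exact E2.trans' (E2.symm' hwC) hbC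
      · simp only [hwA, hbA]
  · have hwA : w ∉ A := fun hw => hwC (hA hw)
    have hyA : y ∉ A := fun hy => hwC (E2.trans' (hA hy) (E2.symm' hwy))
    exact ⟨y, hzy, Setoid.inf_iff_and.2 ⟨hwy, Setoid.ker_def.2 (by simp only [hwA, hyA])⟩⟩

theorem upperApprox_setOf_rel_ne_of_unique {E1 E2 : Setoid V}
    (huniq : ∀ E4, IsLLSolution E1 E4 (fun X => lowerApprox E2 (lowerApprox E1 X)) → E4 = E2)
    {x y : V} (hxy : ¬E2.r x y) :
    upperApprox E1 {z | E2.r x z} ≠ upperApprox E1 {z | E2.r y z} := by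
  rw [← huniq _ (isLLSolution_ker E1 E2)] at hxy
  exact hxy

theorem exists_inter_eq_singleton_of_unique {E1 E2 : Setoid V}
    (huniq : ∀ E4, IsLLSolution E1 E4 (fun X => lowerApprox E2 (lowerApprox E1 X)) → E4 = E2)
    (x : V) : ∃ z a, {w | E2.r x w} ∩ {w | E1.r z w} = {a} := by
  by_contra! hx
  obtain ⟨A, hA, hsplit⟩ := exists_subset_splitting_classes E1 {w | E2.r x w} hx
  have hE := huniq _ (isLLSolution_inf_ker_mem hA hsplit)
  obtain ⟨⟨a, haA, -⟩, b, ⟨hbC, hbA⟩, -⟩ := hsplit x (E2.refl' x)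
  have hab : (E2 ⊓ Setoid.ker (· ∈ A)).r a b := by
    rw [hE]
    exact E2.trans' (E2.symm' (hA haA)) hbC
  exact hbA (Setoid.ker_def.1 (Setoid.inf_iff_and.1 hab).2 ▸ haA)

theorem le_of_upperApprox_setOf_rel_ne {E1 E2 E3 E4 : Setoid V}
    (hne : ∀ x y, ¬E2.r x y → upperApprox E1 {z | E2.r x z} ≠ upperApprox E1 {z | E2.r y z})
    (hsol : IsLLSolution E3 E4 (fun X => lowerApprox E2 (lowerApprox E1 X))) : E4 ≤ E2 := by
  have hN := isLLSolution_iff.1 hsol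
  intro x y hxy
  by_contra h
  exact hne x y h (by rw [← hN x, ← hN y, setOf_rel_eq_of_rel E4 hxy])

theorem le_of_inter_eq_singleton {E1 E2 E3 E4 : Setoid V}
    (hsing : ∀ x, ∃ z a, {w | E2.r x w} ∩ {w | E1.r z w} = {a})
    (hsol : IsLLSolution E3 E4 (fun X => lowerApprox E2 (lowerApprox E1 X)))
    (h42 : E4 ≤ E2) (h31 : E3 ≤ E1) : E2 ≤ E4 := by
  have hN := isLLSolution_iff.1 hsol
  intro u v huv
  obtain ⟨z, a, hza⟩ := hsing u
  have ha : a ∈ {w | E2.r u w} ∩ {w | E1.r z w} := hza ▸ rfl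
  -- the `E4`-class of `w` meets `[z]_{E3} ⊆ [z]_{E1}` inside `[u]_{E2}`, i.e. at `a`
  have rel_a : ∀ w, E2.r u w → E4.r w a := by
    intro w huw
    have hz : z ∈ upperApprox E3 {y | E4.r w y} := by
      rw [hN w, ← setOf_rel_eq_of_rel E2 huw]
      exact ⟨a, ha.2, ha.1⟩
    obtain ⟨y, hzy, hwy⟩ := hz
    have hy : y ∈ {w | E2.r u w} ∩ {w | E1.r z w} :=
      ⟨E2.trans' huw (h42 hwy), h31 hzy⟩
    rw [hza] at hy
    exact hy ▸ hwy
  exact E4.trans' (rel_a u (E2.refl' u)) (E4.symm' (rel_a v huv))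

end LLSolution

open LLSolution in
theorem stmt_10_general (E1 E2 : Setoid V) :
    IsUniqueLLSolution E1 E2 (fun X => lowerApprox E2 (lowerApprox E1 X)) ↔
      ((∀ x y : V, ¬ E2.r x y →
          upperApprox E1 {z | E2.r x z} ≠ upperApprox E1 {z | E2.r y z}) ∧
       (∀ x y : V, ¬ E1.r x y →
          upperApprox E2 {z | E1.r x z} ≠ upperApprox E2 {z | E1.r y z}) ∧
       (∀ x : V, ∃ z : V, ∃ a : V, {w | E2.r x w} ∩ {w | E1.r z w} = {a}) ∧
       (∀ x : V, ∃ z : V, ∃ a : V, {w | E1.r x w} ∩ {w | E2.r z w} = {a})) := by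
  constructor
  · rintro ⟨-, huniq⟩
    have huniq₂ : ∀ E4, IsLLSolution E1 E4 (fun X => lowerApprox E2 (lowerApprox E1 X)) →
        E4 = E2 := fun E4 h => (huniq E1 E4 h).2
    have huniq₁ : ∀ E3, IsLLSolution E2 E3 (fun X => lowerApprox E1 (lowerApprox E2 X)) →
        E3 = E1 := fun E3 h => (huniq E3 E2 (isLLSolution_comm.2 h)).1
    exact ⟨fun _ _ => upperApprox_setOf_rel_ne_of_unique huniq₂,
      fun _ _ => upperApprox_setOf_rel_ne_of_unique huniq₁,
      exists_inter_eq_singleton_of_unique huniq₂, exists_inter_eq_singleton_of_unique huniq₁⟩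
  · rintro ⟨hne₂, hne₁, hsing₂, hsing₁⟩
    refine ⟨fun _ => rfl, fun E3 E4 hsol => ?_⟩
    have hsol' := isLLSolution_comm.1 hsol
    have h42 := le_of_upperApprox_setOf_rel_ne hne₂ hsol
    have h31 := le_of_upperApprox_setOf_rel_ne hne₁ hsol'
    exact ⟨le_antisymm h31 (le_of_inter_eq_singleton hsing₁ hsol' h31 h42),
      le_antisymm h42 (le_of_inter_eq_singleton hsing₂ hsol h42 h31)⟩

theorem stmt_10 [Fintype V] [Nonempty V] (E1 E2 : Setoid V) :
    IsUniqueLLSolution E1 E2 (fun X => lowerApprox E2 (lowerApprox E1 X)) ↔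
      ((∀ x y : V, ¬ E2.r x y →
          upperApprox E1 {z | E2.r x z} ≠ upperApprox E1 {z | E2.r y z}) ∧
       (∀ x y : V, ¬ E1.r x y →
          upperApprox E2 {z | E1.r x z} ≠ upperApprox E2 {z | E1.r y z}) ∧
       (∀ x : V, ∃ z : V, ∃ a : V, {w | E2.r x w} ∩ {w | E1.r z w} = {a}) ∧
       (∀ x : V, ∃ z : V, ∃ a : V, {w | E1.r x w} ∩ {w | E2.r z w} = {a})) :=
  stmt_10_general E1 E2
end

section
/- Let E1 and E2 be equivalence relations on V, suppose (E1, E2) is the unique LL-solution of the operator F = l_{E2} ∘ l_{E1}, and suppose E1 ≠ Id or E2 ≠ Id, where Id is the identity (equality) relation on V. Then ¬(E1 ≤ E2) and ¬(E2 ≤ E1). -/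
variable {V : Type*}

section

variable {E E1 E2 : Setoid V}

@[simp]
lemma lowerApprox_bot (X : Set V) : lowerApprox ⊥ X = X := by
  ext x
  exact ⟨fun hx => hx rfl, fun hx y (hy : x = y) => hy ▸ hx⟩

lemma lowerApprox_lowerApprox_of_le (hle : E1 ≤ E2) (X : Set V) :
    lowerApprox E2 (lowerApprox E1 X) = lowerApprox E2 X := by
  ext x
  exact ⟨fun hx y hy => hx hy (E1.refl y), fun hx y hy z hz => hx (E2.trans hy (hle hz))⟩

lemma lowerApprox_lowerApprox_of_ge (hle : E2 ≤ E1) (X : Set V) :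
    lowerApprox E2 (lowerApprox E1 X) = lowerApprox E1 X := by
  ext x
  exact ⟨fun hx => hx (E2.refl x), fun hx y hy z hz => hx (E1.trans (hle hy) hz)⟩

/-- `l_E` has the two LL-solutions `(⊥, E)` and `(E, ⊥)`. -/
lemma IsUniqueLLSolution.eq_bot_of_eq_lowerApprox {F : Set V → Set V}
    (h : IsUniqueLLSolution E1 E2 F) (hF : ∀ X, F X = lowerApprox E X) : E1 = ⊥ ∧ E2 = ⊥ :=
  ⟨(h.2 ⊥ E fun X => by simp [hF]).1.symm, (h.2 E ⊥ fun X => by simp [hF]).2.symm⟩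

end

theorem stmt_12_general (E1 E2 : Setoid V)
    (h : IsUniqueLLSolution E1 E2 (fun X => lowerApprox E2 (lowerApprox E1 X)))
    (hnid : (∃ x y : V, E1.r x y ∧ x ≠ y) ∨ (∃ x y : V, E2.r x y ∧ x ≠ y)) :
    ¬ (∀ x y : V, E1.r x y → E2.r x y) ∧ ¬ (∀ x y : V, E2.r x y → E1.r x y) := by
  have not_both_bot : ¬ (E1 = ⊥ ∧ E2 = ⊥) := by
    rintro ⟨rfl, rfl⟩
    rcases hnid with ⟨x, y, hxy, hne⟩ | ⟨x, y, hxy, hne⟩ <;> exact hne hxy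
  constructor
  · exact fun hle => not_both_bot <|
      h.eq_bot_of_eq_lowerApprox (lowerApprox_lowerApprox_of_le fun x y => hle x y)
  · exact fun hle => not_both_bot <|
      h.eq_bot_of_eq_lowerApprox (lowerApprox_lowerApprox_of_ge fun x y => hle x y)

theorem stmt_12 [Fintype V] [Nonempty V] (E1 E2 : Setoid V)
    (h : IsUniqueLLSolution E1 E2 (fun X => lowerApprox E2 (lowerApprox E1 X)))
    (hnid : (∃ x y : V, E1.r x y ∧ x ≠ y) ∨ (∃ x y : V, E2.r x y ∧ x ≠ y)) :
    ¬ (∀ x y : V, E1.r x y → E2.r x y) ∧ ¬ (∀ x y : V, E2.r x y → E1.r x y) :=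
  stmt_12_general E1 E2 h hnid
end

section
/- Let E1 and E2 be equivalence relations on V and suppose (E1, E2) is the unique LL-solution of the operator F = l_{E2} ∘ l_{E1}. Then the number of singleton equivalence classes of E1 is at most the number of equivalence classes of E2, and the number of singleton equivalence classes of E2 is at most the number of equivalence classes of E1. -/
variable {V : Type*}

/-!
Let `{x} ≠ {x'}` be singleton classes of `E1` lying in one class of `E2`. Gluing them into a
single `E1`-class only removes `x` or `x'` from `l_{E1} X`, and whenever it removes one of them,
`l_{E2}` removes both anyway because they share an `E2`-class. So `l_{E2} ∘ l_{E1}` is unchanged,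
contradicting uniqueness; hence `x ↦ [x]_{E2}` is injective on the singleton classes of `E1`.
Symmetrically, two singleton classes of `E2` inside one `E1`-class may be glued in `E2`.
-/

namespace Setoid

def collapse (E : Setoid V) (s : Set V) (hs : ∀ a b, E.r a b → a ∈ s → b ∈ s) : Setoid V where
  r a b := E.r a b ∨ (a ∈ s ∧ b ∈ s)
  iseqv :=
    { refl := fun a => Or.inl (E.refl a)
      symm := by
        rintro a b (hab | ⟨ha, hb⟩)
        exacts [Or.inl (E.symm hab), Or.inr ⟨hb, ha⟩]
      trans := by
        rintro a b c (hab | ⟨ha, hb⟩) (hbc | ⟨hb', hc⟩)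
        · exact Or.inl (E.trans hab hbc)
        · exact Or.inr ⟨hs b a (E.symm hab) hb', hc⟩
        · exact Or.inr ⟨ha, hs b c hbc hb⟩
        · exact Or.inr ⟨ha, hc⟩ }

theorem le_collapse (E : Setoid V) (s : Set V) (hs : ∀ a b, E.r a b → a ∈ s → b ∈ s) :
    E ≤ E.collapse s hs :=
  fun _ _ h => Or.inl h

theorem collapse_rel_of_mem {E : Setoid V} {s : Set V} (hs : ∀ a b, E.r a b → a ∈ s → b ∈ s)
    {a b : V} (ha : a ∈ s) (hb : b ∈ s) : (E.collapse s hs).r a b :=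
  Or.inr ⟨ha, hb⟩

theorem collapse_rel_iff {E : Setoid V} {s : Set V} (hs : ∀ a b, E.r a b → a ∈ s → b ∈ s)
    {a b : V} : (E.collapse s hs).r a b ↔ E.r a b ∨ (a ∈ s ∧ b ∈ s) :=
  Iff.rfl

theorem rel_of_mem_pair {E : Setoid V} {x x' a b : V} (hxx' : E.r x x')
    (ha : a ∈ ({x, x'} : Set V)) (hb : b ∈ ({x, x'} : Set V)) : E.r a b := by
  rcases ha with rfl | rfl <;> rcases hb with rfl | rfl
  exacts [E.refl _, hxx', E.symm hxx', E.refl _]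

theorem pair_saturated_of_singleton_classes {E : Setoid V} {x x' : V}
    (hx : {w | E.r x w} = {x}) (hx' : {w | E.r x' w} = {x'}) :
    ∀ a b, E.r a b → a ∈ ({x, x'} : Set V) → b ∈ ({x, x'} : Set V) := by
  rintro a b hab (rfl | rfl)
  · exact Or.inl (hx.subset hab)
  · exact Or.inr (hx'.subset hab)

end Setoid

open Setoid

section LLSolution

variable {E1 E2 E3 E4 : Setoid V}

/- `l_{E2} ∘ l_{E1}` only depends on the composite relation `E2 ∘ E1`, which an enlargement of
either factor inside `E2 ∘ E1` leaves unchanged. -/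

theorem isLLSolution_of_le_left (h13 : E1 ≤ E3)
    (h3 : ∀ b c, E3.r b c → ∃ d, E2.r b d ∧ E1.r d c) :
    IsLLSolution E3 E2 (fun X => lowerApprox E2 (lowerApprox E1 X)) := by
  intro X
  apply Set.Subset.antisymm
  · intro a ha b hab c hbc
    obtain ⟨d, hbd, hdc⟩ := h3 b c hbc
    exact ha (E2.trans hab hbd) hdc
  · exact fun a ha b hab c hbc => ha hab (h13 hbc)

theorem isLLSolution_of_le_right (h24 : E2 ≤ E4)
    (h4 : ∀ b c, E4.r b c → ∃ d, E2.r b d ∧ E1.r d c) :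
    IsLLSolution E1 E4 (fun X => lowerApprox E2 (lowerApprox E1 X)) := by
  intro X
  apply Set.Subset.antisymm
  · intro a ha b hab c hbc
    obtain ⟨d, had, hdb⟩ := h4 a b hab
    exact ha had (E1.trans hdb hbc)
  · exact fun a ha b hab c hbc => ha (h24 hab) hbc

end LLSolution

namespace IsUniqueLLSolution

variable {E1 E2 : Setoid V}

theorem eq_of_singleton_classes_left
    (h : IsUniqueLLSolution E1 E2 (fun X => lowerApprox E2 (lowerApprox E1 X))) {x x' : V}
    (hx : {w | E1.r x w} = {x}) (hx' : {w | E1.r x' w} = {x'}) (hxx' : E2.r x x') : x = x' := by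
  have hs := pair_saturated_of_singleton_classes hx hx'
  have hsol : IsLLSolution (E1.collapse _ hs) E2 (fun X => lowerApprox E2 (lowerApprox E1 X)) := by
    refine isLLSolution_of_le_left (le_collapse E1 _ hs) fun b c hbc => ?_
    rcases (collapse_rel_iff hs).1 hbc with hbc | ⟨hb, hc⟩
    · exact ⟨b, E2.refl b, hbc⟩
    · exact ⟨c, rel_of_mem_pair hxx' hb hc, E1.refl c⟩
  have hcollapse : (E1.collapse _ hs).r x x' := collapse_rel_of_mem hs (by simp) (by simp)
  rw [(h.2 _ _ hsol).1] at hcollapse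
  exact (hx.subset hcollapse).symm

theorem eq_of_singleton_classes_right
    (h : IsUniqueLLSolution E1 E2 (fun X => lowerApprox E2 (lowerApprox E1 X))) {x x' : V}
    (hx : {w | E2.r x w} = {x}) (hx' : {w | E2.r x' w} = {x'}) (hxx' : E1.r x x') : x = x' := by
  have hs := pair_saturated_of_singleton_classes hx hx'
  have hsol : IsLLSolution E1 (E2.collapse _ hs) (fun X => lowerApprox E2 (lowerApprox E1 X)) := by
    refine isLLSolution_of_le_right (le_collapse E2 _ hs) fun b c hbc => ?_
    rcases (collapse_rel_iff hs).1 hbc with hbc | ⟨hb, hc⟩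
    · exact ⟨c, hbc, E1.refl c⟩
    · exact ⟨b, E2.refl b, rel_of_mem_pair hxx' hb hc⟩
  have hcollapse : (E2.collapse _ hs).r x x' := collapse_rel_of_mem hs (by simp) (by simp)
  rw [(h.2 _ _ hsol).2] at hcollapse
  exact (hx.subset hcollapse).symm

end IsUniqueLLSolution

theorem stmt_15_general [Fintype V] (E1 E2 : Setoid V)
    (h : IsUniqueLLSolution E1 E2 (fun X => lowerApprox E2 (lowerApprox E1 X))) :
    Nat.card {x : V // {w | E1.r x w} = {x}} ≤ Nat.card (Quotient E2) ∧
    Nat.card {x : V // {w | E2.r x w} = {x}} ≤ Nat.card (Quotient E1) := by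
  refine ⟨Nat.card_le_card_of_injective (fun p => Quotient.mk E2 p.1) ?_,
    Nat.card_le_card_of_injective (fun p => Quotient.mk E1 p.1) ?_⟩
  · exact fun p q hpq => Subtype.ext (h.eq_of_singleton_classes_left p.2 q.2 (Quotient.exact hpq))
  · exact fun p q hpq => Subtype.ext (h.eq_of_singleton_classes_right p.2 q.2 (Quotient.exact hpq))

theorem stmt_15 [Fintype V] [Nonempty V] (E1 E2 : Setoid V)
    (h : IsUniqueLLSolution E1 E2 (fun X => lowerApprox E2 (lowerApprox E1 X))) :
    Nat.card {x : V // {w | E1.r x w} = {x}} ≤ Nat.card (Quotient E2) ∧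
    Nat.card {x : V // {w | E2.r x w} = {x}} ≤ Nat.card (Quotient E1) :=
  stmt_15_general E1 E2 h
end

section
/- Let E1 and E2 be equivalence relations on V and let x ∈ V. Then there exists z ∈ V such that [x]_{E1} ∩ [z]_{E2} has exactly one element if and only if there do not exist Y, Z ⊆ V with [x]_{E1} = Y ∪ Z, Y ∩ Z = ∅, and u_{E2}(Y) = u_{E2}(Z) = u_{E2}([x]_{E1}). -/
variable {V : Type*}

/-! If an `E`-class meets a set `C` in the single point `a`, every subset of `C` with the
same upper approximation as `C` contains `a`, so no two disjoint such subsets exist. Conversely,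
if every class meeting `C` meets it at least twice, choose one point of `C` in each such class:
these points and the remaining ones split `C` into two halves that each meet every such class. -/

section

variable (E : Setoid V)

theorem upperApprox_eq_iff_of_subset {W C : Set V} (hWC : W ⊆ C) :
    upperApprox E W = upperApprox E C ↔ ∀ c ∈ C, ∃ w ∈ W, E.r c w := by
  constructor
  · intro h c hc
    obtain ⟨w, hcw, hw⟩ : c ∈ upperApprox E W := h ▸ ⟨c, E.refl c, hc⟩
    exact ⟨w, hw, hcw⟩
  · intro h
    ext v
    refine ⟨fun ⟨w, hvw, hw⟩ => ⟨w, hvw, hWC hw⟩, fun ⟨c, hvc, hc⟩ => ?_⟩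
    obtain ⟨w, hw, hcw⟩ := h c hc
    exact ⟨w, E.trans hvc hcw, hw⟩

theorem mem_of_upperApprox_eq {W C : Set V} {z a : V} (hWC : W ⊆ C)
    (hW : upperApprox E W = upperApprox E C) (ha : C ∩ {w | E.r z w} = {a}) : a ∈ W := by
  have haC : a ∈ C ∩ {w | E.r z w} := ha ▸ rfl
  obtain ⟨w, hw, haw⟩ := (upperApprox_eq_iff_of_subset E hWC).1 hW a haC.1
  have hwa : w ∈ C ∩ {w | E.r z w} := ⟨hWC hw, E.trans haC.2 haw⟩
  rw [ha] at hwa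
  exact hwa ▸ hw

theorem exists_split_of_forall_ne_singleton {C : Set V}
    (hC : ∀ z a : V, C ∩ {w | E.r z w} ≠ {a}) :
    ∃ Y Z : Set V, C = Y ∪ Z ∧ Y ∩ Z = ∅ ∧
      upperApprox E Y = upperApprox E C ∧ upperApprox E Z = upperApprox E C := by
  rcases C.eq_empty_or_nonempty with rfl | ⟨c₀, -⟩
  · exact ⟨∅, ∅, (Set.union_empty ∅).symm, Set.inter_empty ∅, rfl, rfl⟩
  have : Nonempty V := ⟨c₀⟩
  let pick : Quotient E → V := Function.invFunOn (Quotient.mk E) C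
  have pick_spec : ∀ c ∈ C, pick ⟦c⟧ ∈ C ∧ E.r (pick ⟦c⟧) c := fun c hc =>
    ⟨Function.invFunOn_mem ⟨c, hc, rfl⟩, Quotient.exact (Function.invFunOn_eq ⟨c, hc, rfl⟩)⟩
  set Y := {c ∈ C | pick ⟦c⟧ = c}
  have hYC : Y ⊆ C := fun c hc => hc.1
  refine ⟨Y, C \ Y, (Set.union_sdiff_cancel hYC).symm, Set.inter_sdiff_self Y C,
    (upperApprox_eq_iff_of_subset E hYC).2 ?_,
    (upperApprox_eq_iff_of_subset E Set.sdiff_subset).2 ?_⟩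
  · intro c hc
    obtain ⟨hpC, hpc⟩ := pick_spec c hc
    refine ⟨pick ⟦c⟧, ⟨hpC, ?_⟩, E.symm hpc⟩
    rw [Quotient.sound hpc]
  · intro c hc
    obtain ⟨hpC, hpc⟩ := pick_spec c hc
    obtain ⟨b, ⟨hbC, hcb⟩, hbp⟩ : ∃ b ∈ C ∩ {w | E.r c w}, b ≠ pick ⟦c⟧ := by
      by_contra! h
      exact hC c (pick ⟦c⟧) (Set.eq_singleton_iff_unique_mem.2 ⟨⟨hpC, E.symm hpc⟩, h⟩)
    refine ⟨b, ⟨hbC, fun hbY => hbp ?_⟩, hcb⟩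
    rw [← hbY.2, Quotient.sound (E.symm hcb)]

theorem exists_inter_eq_singleton_iff_not_exists_split (C : Set V) :
    (∃ z a : V, C ∩ {w | E.r z w} = {a}) ↔
      ¬ ∃ Y Z : Set V, C = Y ∪ Z ∧ Y ∩ Z = ∅ ∧
        upperApprox E Y = upperApprox E Z ∧ upperApprox E Z = upperApprox E C := by
  constructor
  · rintro ⟨z, a, ha⟩ ⟨Y, Z, rfl, hYZ, hY, hZ⟩
    have haY := mem_of_upperApprox_eq E Set.subset_union_left (hY.trans hZ) ha
    have haZ := mem_of_upperApprox_eq E Set.subset_union_right hZ ha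
    exact hYZ.subset ⟨haY, haZ⟩
  · intro hno
    by_contra! hC
    obtain ⟨Y, Z, hsplit, hYZ, hY, hZ⟩ := exists_split_of_forall_ne_singleton E hC
    exact hno ⟨Y, Z, hsplit, hYZ, hY.trans hZ.symm, hZ⟩

end

theorem stmt_16_general (E1 E2 : Setoid V) (x : V) :
    (∃ z : V, ∃ a : V, {w | E1.r x w} ∩ {w | E2.r z w} = {a}) ↔
      ¬ ∃ Y Z : Set V, {w | E1.r x w} = Y ∪ Z ∧ Y ∩ Z = ∅ ∧
        upperApprox E2 Y = upperApprox E2 Z ∧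
        upperApprox E2 Z = upperApprox E2 {w | E1.r x w} :=
  exists_inter_eq_singleton_iff_not_exists_split E2 {w | E1.r x w}

theorem stmt_16 [Fintype V] [Nonempty V] (E1 E2 : Setoid V) (x : V) :
    (∃ z : V, ∃ a : V, {w | E1.r x w} ∩ {w | E2.r z w} = {a}) ↔
      ¬ ∃ Y Z : Set V, {w | E1.r x w} = Y ∪ Z ∧ Y ∩ Z = ∅ ∧
        upperApprox E2 Y = upperApprox E2 Z ∧
        upperApprox E2 Z = upperApprox E2 {w | E1.r x w} :=
  stmt_16_general E1 E2 x
end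

section
/- Let E1 and E2 be equivalence relations on V and let F = u_{E2} ∘ u_{E1}, so that (E1, E2) is a UU-solution of F. Then (E1, E2) is the unique UU-solution of F if and only if all of the following hold: (i) for all x, y ∈ V with ¬(x E2 y), u_{E1}([x]_{E2}) ≠ u_{E1}([y]_{E2}); (ii) for all x, y ∈ V with ¬(x E1 y), u_{E2}([x]_{E1}) ≠ u_{E2}([y]_{E1}); (iii) for every x ∈ V there exists z ∈ V such that [x]_{E2} ∩ [z]_{E1} has exactly one element; (iv) for every x ∈ V there exists z ∈ V such that [x]_{E1} ∩ [z]_{E2} has exactly one element. -/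
variable {V : Type*}

/-!
The operator `u_{E2} ∘ u_{E1}` is determined by the relation `Relation.Comp E2 E1`
(`a` is related to `t` iff `[a]_{E2}` meets `[t]_{E1}`), read off from the images of
singletons; so UU-solutions of `F` are factorizations of this relation, and the problem is
symmetric under exchanging the two factors (the relation is then transposed).

If uniqueness holds, the outer factor must be the kernel of `a ↦ u_{E1}([a]_{E2})`, which
gives (i); and if no block `[x]_{E2} ∩ [z]_{E1}` were a singleton, splitting `[x]_{E2}` along
a set meeting both sides of every block would give a second factorization, so (iii) holds.
Conversely, (i) forces every outer factor `E4` below `E2`, and a singleton block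
`[p]_{E2} ∩ [z]_{E1} = {a}` forces all of `[p]_{E2}` to be `E4`-related to `a`.
(ii) and (iv) are (i) and (iii) for the exchanged pair.
-/

theorem Setoid.comp_swap_iff (E F : Setoid V) {a b : V} :
    Relation.Comp E.r F.r a b ↔ Relation.Comp F.r E.r b a :=
  ⟨fun ⟨w, h, h'⟩ => ⟨w, F.symm h', E.symm h⟩,
    fun ⟨w, h, h'⟩ => ⟨w, E.symm h', F.symm h⟩⟩

theorem Setoid.comp_swap_of_comp_eq {E1 E2 E3 E4 : Setoid V}
    (h : Relation.Comp E4.r E3.r = Relation.Comp E2.r E1.r) :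
    Relation.Comp E3.r E4.r = Relation.Comp E1.r E2.r := by
  funext a t
  rw [propext (Setoid.comp_swap_iff E3 E4), h, propext (Setoid.comp_swap_iff E2 E1)]

theorem mem_upperApprox_upperApprox {E1 E2 : Setoid V} {X : Set V} {a : V} :
    a ∈ upperApprox E2 (upperApprox E1 X) ↔ ∃ t ∈ X, Relation.Comp E2.r E1.r a t :=
  ⟨fun ⟨w, haw, t, hwt, ht⟩ => ⟨t, ht, w, haw, hwt⟩,
    fun ⟨t, ht, w, haw, hwt⟩ => ⟨w, haw, t, hwt, ht⟩⟩

theorem upperApprox_setOf_rel (E1 E2 : Setoid V) (x : V) :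
    upperApprox E1 {z | E2.r x z} = {t | Relation.Comp E2.r E1.r x t} :=
  Set.ext fun _ => ⟨fun ⟨w, htw, hxw⟩ => ⟨w, hxw, E1.symm htw⟩,
    fun ⟨w, hxw, hwt⟩ => ⟨w, E1.symm hwt, hxw⟩⟩

theorem isUUSolution_iff_comp_eq {E1 E2 E3 E4 : Setoid V} :
    IsUUSolution E3 E4 (fun X => upperApprox E2 (upperApprox E1 X)) ↔
      Relation.Comp E4.r E3.r = Relation.Comp E2.r E1.r := by
  refine ⟨fun h => ?_, fun h X => by ext a; simp only [mem_upperApprox_upperApprox, h]⟩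
  funext a t
  have := Set.ext_iff.mp (h {t}) a
  simp only [mem_upperApprox_upperApprox, Set.mem_singleton_iff, exists_eq_left] at this
  exact propext this.symm

theorem isUniqueUUSolution_iff {E1 E2 : Setoid V} :
    IsUniqueUUSolution E1 E2 (fun X => upperApprox E2 (upperApprox E1 X)) ↔
      ∀ E3 E4 : Setoid V, Relation.Comp E4.r E3.r = Relation.Comp E2.r E1.r →
        E3 = E1 ∧ E4 = E2 := by
  simp only [IsUniqueUUSolution, isUUSolution_iff_comp_eq, true_and]

theorem IsUniqueUUSolution.swap {E1 E2 : Setoid V}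
    (h : IsUniqueUUSolution E1 E2 (fun X => upperApprox E2 (upperApprox E1 X))) :
    IsUniqueUUSolution E2 E1 (fun X => upperApprox E1 (upperApprox E2 X)) :=
  isUniqueUUSolution_iff.mpr fun E3 E4 hR =>
    (isUniqueUUSolution_iff.mp h E4 E3 (Setoid.comp_swap_of_comp_eq hR)).symm

theorem Setoid.comp_ker_comp_eq (E1 E2 : Setoid V) :
    Relation.Comp (Setoid.ker (Relation.Comp E2.r E1.r)).r E1.r = Relation.Comp E2.r E1.r := by
  funext a t
  refine propext ⟨fun ⟨w, haw, hwt⟩ => ?_, fun ⟨w, haw, hwt⟩ => ⟨w, ?_, hwt⟩⟩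
  · exact (Setoid.ker_def.mp haw).symm ▸ ⟨w, E2.refl w, hwt⟩
  · exact Setoid.ker_def.mpr (funext fun s => propext
      ⟨fun ⟨v, hav, hvs⟩ => ⟨v, E2.trans (E2.symm haw) hav, hvs⟩,
        fun ⟨v, hwv, hvs⟩ => ⟨v, E2.trans haw hwv, hvs⟩⟩)


theorem IsUniqueUUSolution.upperApprox_setOf_rel_ne {E1 E2 : Setoid V}
    (h : IsUniqueUUSolution E1 E2 (fun X => upperApprox E2 (upperApprox E1 X)))
    {x y : V} (hxy : ¬ E2.r x y) :
    upperApprox E1 {z | E2.r x z} ≠ upperApprox E1 {z | E2.r y z} := by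
  have hker := (isUniqueUUSolution_iff.mp h E1 _ (Setoid.comp_ker_comp_eq E1 E2)).2
  rw [upperApprox_setOf_rel, upperApprox_setOf_rel]
  intro hrow
  exact hxy (hker ▸ Setoid.ker_def.mpr (funext fun t => Set.ext_iff.mp hrow t |>.eq))

theorem Setoid.comp_inf_ker_mem_eq {E1 E2 : Setoid V} {x : V} {S : Set V}
    (hSx : S ⊆ {w | E2.r x w})
    (hS : ∀ z, E2.r x z → ({w | E2.r x w} ∩ {w | E1.r z w} ∩ S).Nonempty ∧
      ({w | E2.r x w} ∩ {w | E1.r z w} ∩ Sᶜ).Nonempty) :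
    Relation.Comp (E2 ⊓ Setoid.ker (· ∈ S)).r E1.r = Relation.Comp E2.r E1.r := by
  funext a t
  refine propext ⟨fun ⟨w, haw, hwt⟩ => ⟨w, (Setoid.inf_iff_and.mp haw).1, hwt⟩, ?_⟩
  rintro ⟨w, haw, hwt⟩
  by_cases hxa : E2.r x a
  · obtain ⟨⟨m, ⟨hxm, hwm⟩, hmS⟩, ⟨d, ⟨hxd, hwd⟩, hdS⟩⟩ :=
      hS w (E2.trans hxa haw)
    by_cases haS : a ∈ S
    · exact ⟨m, Setoid.inf_iff_and.mpr ⟨E2.trans (E2.symm hxa) hxm,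
        Setoid.ker_def.mpr (propext (iff_of_true haS hmS))⟩, E1.trans (E1.symm hwm) hwt⟩
    · exact ⟨d, Setoid.inf_iff_and.mpr ⟨E2.trans (E2.symm hxa) hxd,
        Setoid.ker_def.mpr (propext (iff_of_false haS hdS))⟩, E1.trans (E1.symm hwd) hwt⟩
  · have hwS : w ∉ S := fun hw => hxa (E2.trans (hSx hw) (E2.symm haw))
    exact ⟨w, Setoid.inf_iff_and.mpr ⟨haw,
      Setoid.ker_def.mpr (propext (iff_of_false (fun ha => hxa (hSx ha)) hwS))⟩, hwt⟩

/-- Take `S` to be the set of minima of the blocks for a well-order of `V`. -/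
theorem exists_bisecting_set {E1 E2 : Setoid V} {x : V}
    (hx : ∀ z a, {w | E2.r x w} ∩ {w | E1.r z w} ≠ {a}) :
    ∃ S ⊆ {w | E2.r x w}, ∀ z, E2.r x z →
      ({w | E2.r x w} ∩ {w | E1.r z w} ∩ S).Nonempty ∧
      ({w | E2.r x w} ∩ {w | E1.r z w} ∩ Sᶜ).Nonempty := by
  let S := {w | E2.r x w ∧ ∀ v, E2.r x v → E1.r w v → ¬ WellOrderingRel v w}
  refine ⟨S, fun w hw => hw.1, fun z hxz => ?_⟩
  obtain ⟨m, ⟨hxm, hzm⟩, hmin⟩ :=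
    WellOrderingRel.isWellOrder.wf.has_min ({w | E2.r x w} ∩ {w | E1.r z w})
      ⟨z, hxz, E1.refl z⟩
  have hmS : m ∈ S := ⟨hxm, fun v hxv hmv => hmin v ⟨hxv, E1.trans hzm hmv⟩⟩
  obtain ⟨d, ⟨hxd, hzd⟩, hdm⟩ : ∃ d ∈ {w | E2.r x w} ∩ {w | E1.r z w}, d ≠ m := by
    by_contra! h
    exact hx z m (Set.eq_singleton_iff_unique_mem.mpr ⟨⟨hxm, hzm⟩, h⟩)
  refine ⟨⟨m, ⟨hxm, hzm⟩, hmS⟩, ⟨d, ⟨hxd, hzd⟩, fun hdS => ?_⟩⟩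
  rcases trichotomous_of WellOrderingRel m d with hmd | hmd | hdm'
  · exact hdS.2 m hxm (E1.trans (E1.symm hzd) hzm) hmd
  · exact hdm hmd.symm
  · exact hmin d ⟨hxd, hzd⟩ hdm'

theorem IsUniqueUUSolution.exists_inter_eq_singleton {E1 E2 : Setoid V}
    (h : IsUniqueUUSolution E1 E2 (fun X => upperApprox E2 (upperApprox E1 X))) (x : V) :
    ∃ z a, {w | E2.r x w} ∩ {w | E1.r z w} = {a} := by
  by_contra! hx
  obtain ⟨S, hSx, hS⟩ := exists_bisecting_set hx
  have hsplit := (isUniqueUUSolution_iff.mp h E1 _ (Setoid.comp_inf_ker_mem_eq hSx hS)).2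
  obtain ⟨⟨m, ⟨hxm, -⟩, hmS⟩, ⟨d, ⟨hxd, -⟩, hdS⟩⟩ := hS x (E2.refl x)
  have hmd : (E2 ⊓ Setoid.ker (· ∈ S)).r m d := by
    rw [hsplit]; exact E2.trans (E2.symm hxm) hxd
  exact hdS (Setoid.ker_def.mp (Setoid.inf_iff_and.mp hmd).2 ▸ hmS)

theorem le_of_upperApprox_setOf_rel_ne {E1 E2 E3 E4 : Setoid V}
    (h : ∀ x y, ¬ E2.r x y → upperApprox E1 {z | E2.r x z} ≠ upperApprox E1 {z | E2.r y z})
    (hR : Relation.Comp E4.r E3.r = Relation.Comp E2.r E1.r) : E4 ≤ E2 := by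
  refine Setoid.le_def.mpr fun {a b} hab => by_contra fun hn => h a b hn ?_
  rw [upperApprox_setOf_rel, upperApprox_setOf_rel, ← hR]
  exact Set.ext fun t => ⟨fun ⟨w, haw, hwt⟩ => ⟨w, E4.trans (E4.symm hab) haw, hwt⟩,
    fun ⟨w, hbw, hwt⟩ => ⟨w, E4.trans hab hbw, hwt⟩⟩

/-- For `y ∈ [p]_{E2}`, the point `a` with `[p]_{E2} ∩ [z]_{E1} = {a}` is the only possible
middle point of a path from `y` to `z`, so `E4` relates it to every such `y`. -/
theorem le_of_inter_eq_singleton {E1 E2 E3 E4 : Setoid V}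
    (h : ∀ x, ∃ z a, {w | E2.r x w} ∩ {w | E1.r z w} = {a})
    (hR : Relation.Comp E4.r E3.r = Relation.Comp E2.r E1.r) (h31 : E3 ≤ E1) (h42 : E4 ≤ E2) :
    E2 ≤ E4 := by
  refine Setoid.le_def.mpr fun {p q} hpq => ?_
  obtain ⟨z, a, hpz⟩ := h p
  obtain ⟨⟨hpa, hza⟩, ha⟩ := Set.eq_singleton_iff_unique_mem.mp hpz
  have key : ∀ y, E2.r p y → E4.r y a := by
    intro y hpy
    obtain ⟨w, hyw, hwz⟩ : Relation.Comp E4.r E3.r y z :=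
      hR ▸ ⟨a, E2.trans (E2.symm hpy) hpa, E1.symm hza⟩
    obtain rfl : w = a := ha w ⟨E2.trans hpy (h42 hyw), E1.symm (h31 hwz)⟩
    exact hyw
  exact E4.trans (key p (E2.refl p)) (E4.symm (key q hpq))

theorem stmt_17_general (E1 E2 : Setoid V) :
    IsUniqueUUSolution E1 E2 (fun X => upperApprox E2 (upperApprox E1 X)) ↔
      ((∀ x y : V, ¬ E2.r x y →
          upperApprox E1 {z | E2.r x z} ≠ upperApprox E1 {z | E2.r y z}) ∧
       (∀ x y : V, ¬ E1.r x y →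
          upperApprox E2 {z | E1.r x z} ≠ upperApprox E2 {z | E1.r y z}) ∧
       (∀ x : V, ∃ z : V, ∃ a : V, {w | E2.r x w} ∩ {w | E1.r z w} = {a}) ∧
       (∀ x : V, ∃ z : V, ∃ a : V, {w | E1.r x w} ∩ {w | E2.r z w} = {a})) := by
  refine ⟨fun h => ⟨fun _ _ => h.upperApprox_setOf_rel_ne,
    fun _ _ => h.swap.upperApprox_setOf_rel_ne, h.exists_inter_eq_singleton,
    h.swap.exists_inter_eq_singleton⟩, ?_⟩
  rintro ⟨h1, h2, h3, h4⟩
  refine isUniqueUUSolution_iff.mpr fun E3 E4 hR => ?_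
  have hR' := Setoid.comp_swap_of_comp_eq hR
  have h42 : E4 ≤ E2 := le_of_upperApprox_setOf_rel_ne h1 hR
  have h31 : E3 ≤ E1 := le_of_upperApprox_setOf_rel_ne h2 hR'
  exact ⟨le_antisymm h31 (le_of_inter_eq_singleton h4 hR' h42 h31),
    le_antisymm h42 (le_of_inter_eq_singleton h3 hR h31 h42)⟩

theorem stmt_17 [Fintype V] [Nonempty V] (E1 E2 : Setoid V) :
    IsUniqueUUSolution E1 E2 (fun X => upperApprox E2 (upperApprox E1 X)) ↔
      ((∀ x y : V, ¬ E2.r x y →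
          upperApprox E1 {z | E2.r x z} ≠ upperApprox E1 {z | E2.r y z}) ∧
       (∀ x y : V, ¬ E1.r x y →
          upperApprox E2 {z | E1.r x z} ≠ upperApprox E2 {z | E1.r y z}) ∧
       (∀ x : V, ∃ z : V, ∃ a : V, {w | E2.r x w} ∩ {w | E1.r z w} = {a}) ∧
       (∀ x : V, ∃ z : V, ∃ a : V, {w | E1.r x w} ∩ {w | E2.r z w} = {a})) :=
  stmt_17_general E1 E2
end
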